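/- Let f : ℝ → ℝ be continuously differentiable with compact support in (0,∞). Then ∫₀^∞ (f'(r) + f(r)/(2r))² dr ≥ ∫₀^∞ f(r)²/r² dr. -/

import Mathlib

/-!
Expanding the square, `(f' + f/(2r))² = (f' - f/(2r))² + 2ff'/r`. Since `f²/r` has compact
support in `(0, ∞)`, integrating its derivative `2ff'/r - f²/r²` gives `∫ 2ff'/r = ∫ f²/r²`,
and the remaining square is nonnegative.
-/

open MeasureTheory Set Filter Topology Function

theorem ContinuousOn.integrable_of_support_subset_isCompact {X E : Type*} [TopologicalSpace X]
    [MeasurableSpace X] [OpensMeasurableSpace X] [T2Space X] [NormedAddCommGroup E]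
    {μ : Measure X} [IsFiniteMeasureOnCompacts μ] {g : X → E} {K : Set X}
    (hg : ContinuousOn g K) (hK : IsCompact K) (hgK : support g ⊆ K) : Integrable g μ :=
  (integrableOn_iff_integrable_of_support_subset hgK).mp (hg.integrableOn_compact hK)

section

variable {f : ℝ → ℝ}

theorem support_comp_deriv_subset_tsupport (F : ℝ → ℝ → ℝ → ℝ) (hF : ∀ r, F r 0 0 = 0) :
    support (fun r => F r (f r) (deriv f r)) ⊆ tsupport f := by
  intro r hr
  by_contra h
  have hd : deriv f r = 0 := notMem_support.mp fun h' => h (support_deriv_subset h')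
  exact hr (by simp only [image_eq_zero_of_notMem_tsupport h, hd, hF])

theorem integrableOn_Ioi_comp_deriv (hsupp : HasCompactSupport f) (hpos : tsupport f ⊆ Ioi 0)
    (F : ℝ → ℝ → ℝ → ℝ) (hF : ∀ r, F r 0 0 = 0)
    (hcont : ContinuousOn (fun r => F r (f r) (deriv f r)) (Ioi 0)) :
    IntegrableOn (fun r => F r (f r) (deriv f r)) (Ioi 0) :=
  ((hcont.mono hpos).integrable_of_support_subset_isCompact hsupp
    (support_comp_deriv_subset_tsupport F hF)).integrableOn

theorem integral_Ioi_two_mul_deriv_div_eq (hf : ContDiff ℝ 1 f) (hsupp : HasCompactSupport f)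
    (hpos : tsupport f ⊆ Ioi 0) :
    ∫ r in Ioi 0, 2 * f r * deriv f r / r = ∫ r in Ioi 0, f r ^ 2 / r ^ 2 := by
  have hc := hf.continuous
  have hd := hf.continuous_deriv le_rfl
  set G : ℝ → ℝ := fun r => f r ^ 2 / r
  have hG' : ∀ r ∈ Ioi (0 : ℝ),
      HasDerivAt G (2 * f r * deriv f r / r - f r ^ 2 / r ^ 2) r := by
    intro r (hr : 0 < r)
    refine (((hf.differentiable one_ne_zero r).hasDerivAt.fun_pow 2).div (hasDerivAt_id' r)
      hr.ne').congr_deriv ?_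
    field_simp
    ring
  have hG0 : G =ᶠ[𝓝 0] 0 := by
    have hf0 : f =ᶠ[𝓝 0] 0 :=
      notMem_tsupport_iff_eventuallyEq.mp fun h => lt_irrefl (0 : ℝ) (hpos h)
    filter_upwards [hf0] with r hr
    simp [G, hr]
  have hGlim : Tendsto G atTop (𝓝 0) :=
    (hsupp.mono' (support_comp_deriv_subset_tsupport (fun r x _ => x ^ 2 / r) (by simp))
      ).is_zero_at_infty.mono_left atTop_le_cocompact
  have h1 := integrableOn_Ioi_comp_deriv hsupp hpos (fun r x y => 2 * x * y / r) (by simp)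
    (by fun_prop (disch := intro x (hx : 0 < x); positivity))
  have h2 := integrableOn_Ioi_comp_deriv hsupp hpos (fun r x _ => x ^ 2 / r ^ 2) (by simp)
    (by fun_prop (disch := intro x (hx : 0 < x); positivity))
  have hFTC := integral_Ioi_of_hasDerivAt_of_tendsto
    hG0.continuousAt.continuousWithinAt hG' (h1.sub h2) hGlim
  rw [integral_sub h1 h2, hG0.eq_of_nhds] at hFTC
  simpa [sub_eq_zero] using hFTC

end

/-- For `f : ℝ → ℝ` continuously differentiable with compact support in `(0,∞)`,
`∫₀^∞ (f'(r) + f(r)/(2r))² dr ≥ ∫₀^∞ f(r)²/r² dr`. -/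
theorem stmt2 (f : ℝ → ℝ) (hf : ContDiff ℝ 1 f) (hsupp : HasCompactSupport f)
    (hpos : tsupport f ⊆ Set.Ioi 0) :
    ∫ r in Set.Ioi (0:ℝ), (deriv f r + f r / (2 * r)) ^ 2
      ≥ ∫ r in Set.Ioi (0:ℝ), (f r) ^ 2 / r ^ 2 := by
  have hc := hf.continuous
  have hd := hf.continuous_deriv le_rfl
  have hsq := integrableOn_Ioi_comp_deriv hsupp hpos (fun r x y => (y - x / (2 * r)) ^ 2)
    (by simp) (by fun_prop (disch := intro x (hx : 0 < x); positivity))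
  have hcross := integrableOn_Ioi_comp_deriv hsupp hpos (fun r x y => 2 * x * y / r) (by simp)
    (by fun_prop (disch := intro x (hx : 0 < x); positivity))
  have hexpand : ∀ r ∈ Ioi (0 : ℝ), (deriv f r + f r / (2 * r)) ^ 2
      = (deriv f r - f r / (2 * r)) ^ 2 + 2 * f r * deriv f r / r := by
    intro r (hr : 0 < r)
    field_simp
    ring
  calc ∫ r in Ioi 0, (deriv f r + f r / (2 * r)) ^ 2
      = (∫ r in Ioi 0, (deriv f r - f r / (2 * r)) ^ 2)
          + ∫ r in Ioi 0, 2 * f r * deriv f r / r := by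
        rw [setIntegral_congr_fun measurableSet_Ioi hexpand, integral_add hsq hcross]
    _ ≥ ∫ r in Ioi 0, 2 * f r * deriv f r / r :=
        le_add_of_nonneg_left (setIntegral_nonneg measurableSet_Ioi fun r _ => sq_nonneg _)
    _ = ∫ r in Ioi 0, f r ^ 2 / r ^ 2 := integral_Ioi_two_mul_deriv_div_eq hf hsupp hpos
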